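/- arXiv:2209.05045 — 3 statements merged into one kernel-verified Lean document; each statement's English description precedes it below -/
import Mathlib

section
/- Let f : ℝ^d → ℝ be L-Lipschitz and almost everywhere differentiable, with f_δ(x) = E_{u ~ Uniform(B_1(0))}[f(x + δu)] differentiable. Then for every x, the gradient ∇f_δ(x) equals E_{u ~ Uniform(B_1(0))}[∇f(x + δu)]. -/
open MeasureTheory Metric
open scoped RealInnerProductSpace

/-- The uniform probability measure on the closed unit ball of `ℝ^d`. -/
noncomputable def unifBall (d : ℕ) : Measure (EuclideanSpace ℝ (Fin d)) :=
  (volume (closedBall (0 : EuclideanSpace ℝ (Fin d)) 1))⁻¹ •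
    volume.restrict (closedBall (0 : EuclideanSpace ℝ (Fin d)) 1)

lemma unifBall_ac (d : ℕ) :
    unifBall d ≪ (volume : Measure (EuclideanSpace ℝ (Fin d))) :=
  Measure.smul_absolutelyContinuous.trans
    (Measure.absolutelyContinuous_of_le Measure.restrict_le_self)

lemma unifBall_prob (d : ℕ) : IsProbabilityMeasure (unifBall d) := by
  constructor
  have h1 : volume (closedBall (0 : EuclideanSpace ℝ (Fin d)) 1) ≠ 0 :=
    (measure_closedBall_pos volume 0 one_pos).ne'
  have h2 : volume (closedBall (0 : EuclideanSpace ℝ (Fin d)) 1) ≠ ⊤ :=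
    measure_closedBall_lt_top.ne
  simp only [unifBall, Measure.smul_apply, Measure.restrict_apply MeasurableSet.univ,
    Set.univ_inter, smul_eq_mul]
  exact ENNReal.inv_mul_cancel h1 h2

/-- Pull back a volume-a.e. property along the affine map `u ↦ x + δ • u`. -/
lemma unifBall_ae_comp {d : ℕ} {δ : ℝ} (hδ : δ ≠ 0) (x : EuclideanSpace ℝ (Fin d))
    {P : EuclideanSpace ℝ (Fin d) → Prop}
    (h : ∀ᵐ y ∂(volume : Measure (EuclideanSpace ℝ (Fin d))), P y) :
    ∀ᵐ u ∂(unifBall d), P (x + δ • u) := by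
  rw [ae_iff] at h ⊢
  apply unifBall_ac d
  have hset : {u : EuclideanSpace ℝ (Fin d) | ¬ P (x + δ • u)}
      = (δ • ·) ⁻¹' ((x + ·) ⁻¹' {y | ¬ P y}) := rfl
  rw [hset, Measure.addHaar_preimage_smul volume hδ, measure_preimage_add, h, mul_zero]

set_option maxHeartbeats 1000000 in
theorem stmt_2 (d : ℕ) (L δ : ℝ) (hδ : 0 < δ) (hL : 0 < L)
    (f fδ : EuclideanSpace ℝ (Fin d) → ℝ)
    (g : EuclideanSpace ℝ (Fin d) → EuclideanSpace ℝ (Fin d))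
    (hf : LipschitzWith (Real.toNNReal L) f)
    -- `f` is a.e. differentiable with gradient `g` (Rademacher; `g` arbitrary elsewhere)
    (hg : ∀ᵐ x ∂(volume : Measure (EuclideanSpace ℝ (Fin d))), HasGradientAt f (g x) x)
    (hfδ : ∀ x, fδ x = ∫ u, f (x + δ • u) ∂(unifBall d))
    (hdiff : Differentiable ℝ fδ) :
    ∀ x, gradient fδ x = ∫ u, g (x + δ • u) ∂(unifBall d) := by
  set μ := unifBall d with hμdef
  haveI : IsProbabilityMeasure μ := unifBall_prob d
  -- a measurable version of g
  set G : EuclideanSpace ℝ (Fin d) → EuclideanSpace ℝ (Fin d) := fun y => (InnerProductSpace.toDual ℝ (EuclideanSpace ℝ (Fin d))).symm (fderiv ℝ f y) with hGdef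
  have hGmeas : Measurable G :=
    (LinearIsometryEquiv.continuous _).measurable.comp (measurable_fderiv ℝ f)
  -- combined a.e. (volume) properties of g
  have hvol : ∀ᵐ y ∂(volume : Measure (EuclideanSpace ℝ (Fin d))),
      HasGradientAt f (g y) y ∧ ‖g y‖ ≤ L ∧ g y = G y := by
    filter_upwards [hg] with y hy
    have hFD : HasFDerivAt f (InnerProductSpace.toDual ℝ (EuclideanSpace ℝ (Fin d)) (g y)) y :=
      hasGradientAt_iff_hasFDerivAt.1 hy
    have hnorm : ‖g y‖ ≤ L := by
      have := hFD.le_of_lipschitz hf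
      rwa [LinearIsometryEquiv.norm_map, Real.coe_toNNReal L hL.le] at this
    refine ⟨hy, hnorm, ?_⟩
    rw [hGdef]
    simp only [hFD.fderiv, LinearIsometryEquiv.symm_apply_apply]
  -- integrability of translates of f
  have hint : ∀ z : EuclideanSpace ℝ (Fin d), Integrable (fun u => f (z + δ • u)) μ := by
    intro z
    rw [hμdef, unifBall]
    refine Integrable.smul_measure ?_
      (ENNReal.inv_ne_top.2 (measure_closedBall_pos volume 0 one_pos).ne')
    exact ((hf.continuous.comp
      (continuous_const.add (continuous_const_smul δ))).continuousOn).integrableOn_compact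
      (isCompact_closedBall 0 1)
  intro x
  -- a.e. (μ) properties at x + δ • u
  have key : ∀ᵐ u ∂μ, HasGradientAt f (g (x + δ • u)) (x + δ • u) ∧
      ‖g (x + δ • u)‖ ≤ L ∧ g (x + δ • u) = G (x + δ • u) :=
    unifBall_ae_comp (P := fun y => HasGradientAt f (g y) y ∧ ‖g y‖ ≤ L ∧ g y = G y)
      hδ.ne' x hvol
  -- integrability of u ↦ g (x + δ • u)
  have hgmeas : AEStronglyMeasurable (fun u => g (x + δ • u)) μ := by
    refine AEStronglyMeasurable.congr
      (f := fun u => G (x + δ • u)) ?_ ?_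
    · exact (hGmeas.comp (by fun_prop : Measurable
        (fun u : EuclideanSpace ℝ (Fin d) => x + δ • u))).aestronglyMeasurable
    · filter_upwards [key] with u hu using hu.2.2.symm
  have hgint : Integrable (fun u => g (x + δ • u)) μ := by
    refine Integrable.mono' (integrable_const L) hgmeas ?_
    filter_upwards [key] with u hu using hu.2.1
  refine ext_inner_right ℝ fun v => ?_
  -- the derivative of fδ along v at x
  have hcurve : ∀ y : EuclideanSpace ℝ (Fin d), HasDerivAt (fun t : ℝ => y + t • v) v 0 := fun y => by
    simpa using ((hasDerivAt_id (0 : ℝ)).smul_const v).const_add y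
  have hD : HasDerivAt (fun t : ℝ => fδ (x + t • v)) ⟪gradient fδ x, v⟫ 0 := by
    have hFD : HasFDerivAt fδ (InnerProductSpace.toDual ℝ (EuclideanSpace ℝ (Fin d)) (gradient fδ x)) x :=
      hasGradientAt_iff_hasFDerivAt.1 (hdiff x).hasGradientAt
    have : HasFDerivAt fδ (InnerProductSpace.toDual ℝ (EuclideanSpace ℝ (Fin d)) (gradient fδ x))
        (x + (0 : ℝ) • v) := by simpa using hFD
    simpa [InnerProductSpace.toDual_apply_apply, Function.comp_def] using this.comp_hasDerivAt 0 (hcurve x)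
  have hslope1 : Filter.Tendsto (fun t : ℝ => t⁻¹ * (fδ (x + t • v) - fδ x))
      (nhdsWithin 0 {(0:ℝ)}ᶜ) (nhds ⟪gradient fδ x, v⟫) := by
    have := hasDerivAt_iff_tendsto_slope.1 hD
    refine this.congr fun t => ?_
    simp [slope_def_field, div_eq_inv_mul]
  -- dominated convergence for the slopes of f
  have hslope2 : Filter.Tendsto
      (fun t : ℝ => ∫ u, t⁻¹ * (f (x + t • v + δ • u) - f (x + δ • u)) ∂μ)
      (nhdsWithin 0 {(0:ℝ)}ᶜ) (nhds (∫ u, ⟪g (x + δ • u), v⟫ ∂μ)) := by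
    refine tendsto_integral_filter_of_dominated_convergence (fun _ => L * ‖v‖)
      ?_ ?_ (integrable_const _) ?_
    · filter_upwards with t
      exact ((continuous_const.mul ((hf.continuous.comp (by fun_prop)).sub
        (hf.continuous.comp (by fun_prop)))).aestronglyMeasurable)
    · filter_upwards [self_mem_nhdsWithin] with t (ht : t ≠ 0)
      filter_upwards with u
      have hd : dist (x + t • v + δ • u) (x + δ • u) = ‖t • v‖ := by
        rw [dist_eq_norm]
        congr 1
        abel
      have hlip := hf.dist_le_mul (x + t • v + δ • u) (x + δ • u)
      rw [Real.dist_eq, hd, Real.coe_toNNReal L hL.le] at hlip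
      have : |t⁻¹ * (f (x + t • v + δ • u) - f (x + δ • u))|
          ≤ |t|⁻¹ * (L * (|t| * ‖v‖)) := by
        rw [abs_mul, abs_inv]
        exact mul_le_mul_of_nonneg_left (by simpa [norm_smul] using hlip)
          (by positivity)
      calc ‖t⁻¹ * (f (x + t • v + δ • u) - f (x + δ • u))‖
          ≤ |t|⁻¹ * (L * (|t| * ‖v‖)) := this
        _ = L * ‖v‖ := by
            field_simp
    · filter_upwards [key] with u hu
      have hFD : HasFDerivAt f (InnerProductSpace.toDual ℝ (EuclideanSpace ℝ (Fin d)) (g (x + δ • u)))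
          (x + (0:ℝ) • v + δ • u) := by
        simpa using hasGradientAt_iff_hasFDerivAt.1 hu.1
      have hcurve' : HasDerivAt (fun t : ℝ => x + t • v + δ • u) v 0 := by
        simpa [add_right_comm] using hcurve (x + δ • u)
      have hD' : HasDerivAt (fun t : ℝ => f (x + t • v + δ • u))
          ⟪g (x + δ • u), v⟫ 0 := by
        simpa [InnerProductSpace.toDual_apply_apply, Function.comp_def] using hFD.comp_hasDerivAt 0 hcurve'
      have := hasDerivAt_iff_tendsto_slope.1 hD'
      refine this.congr fun t => ?_
      simp [slope_def_field, div_eq_inv_mul]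
  -- identify the integrals of slopes with slopes of fδ
  have heq : ∀ t : ℝ, ∫ u, t⁻¹ * (f (x + t • v + δ • u) - f (x + δ • u)) ∂μ
      = t⁻¹ * (fδ (x + t • v) - fδ x) := by
    intro t
    rw [integral_const_mul, integral_sub (hint (x + t • v)) (hint x),
      hfδ (x + t • v), hfδ x]
  rw [show (fun t : ℝ => ∫ u, t⁻¹ * (f (x + t • v + δ • u) - f (x + δ • u)) ∂μ)
      = fun t : ℝ => t⁻¹ * (fδ (x + t • v) - fδ x) from funext heq] at hslope2
  have huniq : ⟪gradient fδ x, v⟫ = ∫ u, ⟪g (x + δ • u), v⟫ ∂μ :=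
    tendsto_nhds_unique hslope1 hslope2
  rw [huniq]
  rw [show (fun u => ⟪g (x + δ • u), v⟫) = fun u => ⟪v, g (x + δ • u)⟫ from
    funext fun u => real_inner_comm _ _]
  rw [integral_inner hgint v, real_inner_comm]
end

section
/- Let f : ℝ^d → ℝ be L-Lipschitz and f_δ its uniform smoothing over the δ-ball. Then for every x ∈ ℝ^d, ∇f_δ(x) ∈ ∂_δ f(x), where ∂_δ f(x) = conv(∪_{y ∈ B_δ(x)} ∂f(y)) is the δ-Goldstein subdifferential defined via the Clarke subdifferential ∂f. -/
open MeasureTheory Metric Filter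

/-- Clarke subdifferential: convex hull of all limits of gradients along sequences of
differentiability points converging to `x`. -/
noncomputable def clarke {d : ℕ} (f : EuclideanSpace ℝ (Fin d) → ℝ)
    (x : EuclideanSpace ℝ (Fin d)) : Set (EuclideanSpace ℝ (Fin d)) :=
  convexHull ℝ {g | ∃ xs gs : ℕ → EuclideanSpace ℝ (Fin d),
    (∀ n, HasGradientAt f (gs n) (xs n)) ∧
    Tendsto xs atTop (nhds x) ∧ Tendsto gs atTop (nhds g)}

/-- The δ-Goldstein subdifferential `conv(⋃_{y ∈ B_δ(x)} ∂f(y))`. -/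
noncomputable def goldstein {d : ℕ} (δ : ℝ) (f : EuclideanSpace ℝ (Fin d) → ℝ)
    (x : EuclideanSpace ℝ (Fin d)) : Set (EuclideanSpace ℝ (Fin d)) :=
  convexHull ℝ (⋃ y ∈ closedBall x δ, clarke f y)

open Topology

lemma sum_extend_aux {ι : Type*} [Fintype ι] {β : Type*} [Fintype β] [DecidableEq β]
    (e : ι ↪ β) {M : Type*} [AddCommMonoid M] (g : β → M)
    (hg : ∀ j, (¬ ∃ i, e i = j) → g j = 0) : ∑ j, g j = ∑ i, g (e i) := by
  have h1 : ∑ j ∈ Finset.univ.image (fun i : ι => e i), g j = ∑ i, g (e i) :=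
    Finset.sum_image (fun a _ b _ h => e.injective h)
  rw [← h1]
  apply (Finset.sum_subset (Finset.subset_univ _) _).symm
  intro j _ hj
  apply hg
  simpa using hj

variable {E : Type*} [NormedAddCommGroup E] [NormedSpace ℝ E] [FiniteDimensional ℝ E]

lemma my_isCompact_convexHull {s : Set E} (hs : IsCompact s) :
    IsCompact (convexHull ℝ s) := by
  rcases s.eq_empty_or_nonempty with rfl | ⟨z₀, hz₀⟩
  · simpa using isCompact_empty
  set n := Module.finrank ℝ E + 1 with hn
  have hT : Continuous fun p : (Fin n → ℝ) × (Fin n → E) => ∑ i, p.1 i • p.2 i := by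
    apply continuous_finset_sum
    intro i _
    exact ((continuous_apply i).comp continuous_fst).smul
      ((continuous_apply i).comp continuous_snd)
  have key : convexHull ℝ s =
      (fun p : (Fin n → ℝ) × (Fin n → E) => ∑ i, p.1 i • p.2 i) ''
        (stdSimplex ℝ (Fin n) ×ˢ Set.univ.pi fun _ : Fin n => s) := by
    apply Set.Subset.antisymm
    · intro x hx
      obtain ⟨ι, hι, z, w, hzs, hai, hw0, hw1, hwz⟩ :=
        eq_pos_convex_span_of_mem_convexHull hx
      classical
      have hcard : Fintype.card ι ≤ n :=
        hai.card_le_finrank_succ.trans (Nat.add_le_add_right (Submodule.finrank_le _) 1)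
      obtain ⟨e⟩ : Nonempty (ι ↪ Fin n) := by
        rwa [Function.Embedding.nonempty_iff_card_le, Fintype.card_fin]
      set w' : Fin n → ℝ := Function.extend e w 0 with hw'
      set z' : Fin n → E := Function.extend e z (fun _ => z₀) with hz'
      have hw'0 : ∀ j, 0 ≤ w' j := by
        intro j
        rcases em (∃ i, e i = j) with ⟨i, rfl⟩ | h
        · rw [hw', e.injective.extend_apply]; exact (hw0 i).le
        · rw [hw', Function.extend_apply' _ _ _ h]; rfl
      have hw'1 : ∑ j, w' j = 1 := by
        rw [sum_extend_aux e w' fun j hj => by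
          rw [hw', Function.extend_apply' _ _ _ hj]; rfl]
        simp only [hw', e.injective.extend_apply]
        exact hw1
      have hz's : ∀ j, z' j ∈ s := by
        intro j
        rcases em (∃ i, e i = j) with ⟨i, rfl⟩ | h
        · rw [hz', e.injective.extend_apply]; exact hzs (Set.mem_range_self i)
        · rw [hz', Function.extend_apply' _ _ _ h]; exact hz₀
      have hx' : ∑ j, w' j • z' j = x := by
        rw [sum_extend_aux e (fun j => w' j • z' j) fun j hj => by
          show w' j • z' j = 0
          rw [hw', Function.extend_apply' _ _ _ hj]; simp]
        simp only [hw', hz', e.injective.extend_apply]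
        exact hwz
      exact ⟨(w', z'), ⟨⟨hw'0, hw'1⟩, fun j _ => hz's j⟩, hx'⟩
    · rintro x ⟨⟨w, z⟩, ⟨hw, hz⟩, rfl⟩
      exact (convex_convexHull ℝ s).sum_mem (fun i _ => hw.1 i) hw.2
        fun i _ => subset_convexHull ℝ s (hz i trivial)
  rw [key]
  exact ((isCompact_stdSimplex (𝕜 := ℝ) (ι := Fin n)).prod (isCompact_univ_pi fun _ => hs)).image hT


/-- The pre-hull set of limiting gradients. -/
def Sset {d : ℕ} (f : EuclideanSpace ℝ (Fin d) → ℝ) (y : EuclideanSpace ℝ (Fin d)) :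
    Set (EuclideanSpace ℝ (Fin d)) :=
  {g | ∃ xs gs : ℕ → EuclideanSpace ℝ (Fin d),
    (∀ n, HasGradientAt f (gs n) (xs n)) ∧
    Tendsto xs atTop (nhds y) ∧ Tendsto gs atTop (nhds g)}

lemma goldstein_eq {d : ℕ} (δ : ℝ) (f : EuclideanSpace ℝ (Fin d) → ℝ)
    (x : EuclideanSpace ℝ (Fin d)) :
    goldstein δ f x = convexHull ℝ (⋃ y ∈ closedBall x δ, Sset f y) := by
  apply Set.Subset.antisymm
  · refine convexHull_min (Set.iUnion₂_subset fun y hy => ?_) (convex_convexHull ℝ _)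
    exact convexHull_mono (Set.subset_iUnion₂ (s := fun y _ => Sset f y) y hy)
  · refine convexHull_mono (Set.iUnion₂_mono fun y hy => ?_)
    exact subset_convexHull ℝ _

lemma norm_le_of_hasGradientAt {d : ℕ} {L : ℝ} (hL : 0 ≤ L)
    {f : EuclideanSpace ℝ (Fin d) → ℝ} (hf : LipschitzWith (Real.toNNReal L) f)
    {g z : EuclideanSpace ℝ (Fin d)} (h : HasGradientAt f g z) : ‖g‖ ≤ L := by
  have h1 := h.hasFDerivAt.le_of_lipschitz hf
  rwa [(InnerProductSpace.toDual ℝ _).norm_map, Real.coe_toNNReal L hL] at h1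

lemma norm_le_of_mem_Sset {d : ℕ} {L : ℝ} (hL : 0 ≤ L)
    {f : EuclideanSpace ℝ (Fin d) → ℝ} (hf : LipschitzWith (Real.toNNReal L) f)
    {g y : EuclideanSpace ℝ (Fin d)} (hg : g ∈ Sset f y) : ‖g‖ ≤ L := by
  obtain ⟨xs, gs, hgrad, _, hgs⟩ := hg
  refine le_of_tendsto (hgs.norm) (Eventually.of_forall fun n => ?_)
  exact norm_le_of_hasGradientAt hL hf (hgrad n)

lemma gradient_mem_Sset {d : ℕ} {f : EuclideanSpace ℝ (Fin d) → ℝ}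
    {y : EuclideanSpace ℝ (Fin d)} (h : DifferentiableAt ℝ f y) :
    gradient f y ∈ Sset f y :=
  ⟨fun _ => y, fun _ => gradient f y, fun _ => h.hasGradientAt,
    tendsto_const_nhds, tendsto_const_nhds⟩

lemma tendsto_aux {X : Type*} [PseudoMetricSpace X] {P a : ℕ → X} {y : X}
    (h : ∀ n : ℕ, dist (P n) (a n) < 1 / (n + 1)) (ha : Tendsto a atTop (𝓝 y)) :
    Tendsto P atTop (𝓝 y) := by
  rw [tendsto_iff_dist_tendsto_zero] at ha ⊢
  refine squeeze_zero (fun n => dist_nonneg)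
    (fun n => (dist_triangle (P n) (a n) y).trans (add_le_add (h n).le le_rfl)) ?_
  simpa using tendsto_one_div_add_atTop_nhds_zero_nat.add ha

lemma isClosed_unionSset {d : ℕ} (f : EuclideanSpace ℝ (Fin d) → ℝ)
    (x : EuclideanSpace ℝ (Fin d)) (δ : ℝ) :
    IsClosed (⋃ y ∈ closedBall x δ, Sset f y) := by
  refine IsSeqClosed.isClosed ?_
  intro u g hu hug
  have hyex : ∀ n, ∃ y ∈ closedBall x δ, u n ∈ Sset f y := by
    intro n
    simpa using hu n
  choose ys hysball hyS using hyex
  obtain ⟨y, hy, φ, hφ, hyt⟩ := (isCompact_closedBall x δ).tendsto_subseq hysball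
  have key : ∀ n : ℕ, ∃ p q : EuclideanSpace ℝ (Fin d), HasGradientAt f q p ∧
      dist p (ys (φ n)) < 1 / (n + 1) ∧ dist q (u (φ n)) < 1 / (n + 1) := by
    intro n
    obtain ⟨xs, gs, hgrad, hxs, hgs⟩ := hyS (φ n)
    have hε : (0 : ℝ) < 1 / (n + 1) := by positivity
    obtain ⟨N1, hN1⟩ := (Metric.tendsto_atTop.mp hxs) _ hε
    obtain ⟨N2, hN2⟩ := (Metric.tendsto_atTop.mp hgs) _ hε
    exact ⟨xs (max N1 N2), gs (max N1 N2), hgrad _,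
      hN1 _ (le_max_left _ _), hN2 _ (le_max_right _ _)⟩
  choose P Q hPQ hP hQ using key
  have hPy : Tendsto P atTop (𝓝 y) := tendsto_aux hP hyt
  have hQg : Tendsto Q atTop (𝓝 g) :=
    tendsto_aux hQ (hug.comp hφ.tendsto_atTop)
  exact Set.mem_biUnion hy ⟨P, Q, hPQ, hPy, hQg⟩

theorem stmt_3 (d : ℕ) (L δ : ℝ) (hδ : 0 < δ) (hL : 0 < L)
    (f fδ : EuclideanSpace ℝ (Fin d) → ℝ)
    (hf : LipschitzWith (Real.toNNReal L) f)
    (hfδ : ∀ x, fδ x = ∫ u, f (x + δ • u) ∂(unifBall d)) :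
    ∀ x, gradient fδ x ∈ goldstein δ f x := by
  intro x
  have hL0 : (0:ℝ) ≤ L := hL.le
  set μ := unifBall d with hμ
  have hc_pos : 0 < volume (closedBall (0 : EuclideanSpace ℝ (Fin d)) 1) :=
    measure_closedBall_pos _ _ one_pos
  have hc_top : volume (closedBall (0 : EuclideanSpace ℝ (Fin d)) 1) ≠ ⊤ :=
    measure_closedBall_lt_top.ne
  have hprob : IsProbabilityMeasure μ := by
    constructor
    rw [hμ, unifBall, Measure.smul_apply, Measure.restrict_apply_univ, smul_eq_mul,
      ENNReal.inv_mul_cancel hc_pos.ne' hc_top]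
  have hac : μ ≪ volume := by
    rw [hμ, unifBall]
    exact Measure.smul_absolutelyContinuous.trans
      (Measure.absolutelyContinuous_of_le Measure.restrict_le_self)
  have hball : ∀ᵐ u ∂μ, u ∈ closedBall (0 : EuclideanSpace ℝ (Fin d)) 1 := by
    rw [hμ, unifBall]
    exact Measure.ae_smul_measure (ae_restrict_mem measurableSet_closedBall) _
  have hdiff_ae : ∀ᵐ u ∂μ, DifferentiableAt ℝ f (x + δ • u) := by
    refine Measure.ae_mono' hac ?_
    have hN : ∀ᵐ z : EuclideanSpace ℝ (Fin d) ∂volume, DifferentiableAt ℝ f z :=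
      hf.ae_differentiableAt
    show ∀ᵐ u : EuclideanSpace ℝ (Fin d) ∂volume, DifferentiableAt ℝ f (x + δ • u)
    rw [ae_iff] at hN ⊢
    have heq : {u : EuclideanSpace ℝ (Fin d) | ¬DifferentiableAt ℝ f (x + δ • u)}
        = (δ • ·) ⁻¹' ((x + ·) ⁻¹' {z | ¬DifferentiableAt ℝ f z}) := rfl
    rw [heq, Measure.addHaar_preimage_smul volume hδ.ne', measure_preimage_add, hN, mul_zero]
  set F' : EuclideanSpace ℝ (Fin d) → (EuclideanSpace ℝ (Fin d) →L[ℝ] ℝ) :=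
    fun u => fderiv ℝ f (x + δ • u) with hF'
  have h_diff : ∀ᵐ u ∂μ, HasFDerivAt (fun x' => f (x' + δ • u)) (F' u) x := by
    filter_upwards [hdiff_ae] with u hu
    have h1 : HasFDerivAt (fun x' : EuclideanSpace ℝ (Fin d) => x' + δ • u)
        (ContinuousLinearMap.id ℝ _) x := (hasFDerivAt_id x).add_const _
    have h2 := hu.hasFDerivAt.comp x h1
    rw [ContinuousLinearMap.comp_id] at h2
    exact h2
  have hcont : ∀ x' : EuclideanSpace ℝ (Fin d), Continuous fun u => f (x' + δ • u) :=
    fun x' => hf.continuous.comp (continuous_const.add (continuous_id.const_smul δ))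
  have hF_meas : ∀ᶠ x' in 𝓝 x, AEStronglyMeasurable (fun u => f (x' + δ • u)) μ :=
    Eventually.of_forall fun x' => (hcont x').aestronglyMeasurable
  have hF_int : Integrable (fun u => f (x + δ • u)) μ := by
    rw [hμ, unifBall]
    refine Integrable.smul_measure ?_ (ENNReal.inv_ne_top.2 hc_pos.ne')
    exact (hcont x).continuousOn.integrableOn_compact (isCompact_closedBall _ _)
  have hF'_meas : AEStronglyMeasurable F' μ := by
    apply Measurable.aestronglyMeasurable
    exact (measurable_fderiv ℝ f).comp
      (measurable_const.add (measurable_id.const_smul δ))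
  have h_lip : ∀ᵐ u ∂μ, LipschitzOnWith (Real.nnabs L) (fun x' => f (x' + δ • u)) (ball x 1) := by
    refine Eventually.of_forall fun u => LipschitzWith.lipschitzOnWith ?_
    refine LipschitzWith.of_dist_le_mul fun a b => ?_
    have h1 := hf.dist_le_mul (a + δ • u) (b + δ • u)
    rw [dist_add_right, Real.coe_toNNReal _ hL0] at h1
    rwa [Real.coe_nnabs, abs_of_pos hL]
  have bound_int : Integrable (fun _ : EuclideanSpace ℝ (Fin d) => L) μ := integrable_const _
  obtain ⟨hF'_int, hderiv⟩ := hasFDerivAt_integral_of_dominated_loc_of_lip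
    (F := fun x' u => f (x' + δ • u)) (F' := F') (x₀ := x) (bound := fun _ => L)
    (ball_mem_nhds x one_pos) hF_meas hF_int hF'_meas h_lip bound_int h_diff
  have hfδeq : fδ = fun x' => ∫ u, f (x' + δ • u) ∂μ := funext hfδ
  have h3 : HasFDerivAt fδ (∫ u, F' u ∂μ) x := by rw [hfδeq]; exact hderiv
  have h4 : gradient fδ x = (InnerProductSpace.toDual ℝ _).symm (∫ u, F' u ∂μ) :=
    h3.hasGradientAt.gradient
  have h5 : (InnerProductSpace.toDual ℝ (EuclideanSpace ℝ (Fin d))).symm (∫ u, F' u ∂μ)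
      = ∫ u, (InnerProductSpace.toDual ℝ (EuclideanSpace ℝ (Fin d))).symm (F' u) ∂μ :=
    (LinearIsometry.integral_comp_comm
      (InnerProductSpace.toDual ℝ (EuclideanSpace ℝ (Fin d))).symm.toLinearIsometry F').symm
  have hgrad_eq : gradient fδ x = ∫ u, gradient f (x + δ • u) ∂μ := by
    rw [h4, h5]
    rfl
  rw [hgrad_eq, goldstein_eq]
  set K : Set (EuclideanSpace ℝ (Fin d)) := ⋃ y ∈ closedBall x δ, Sset f y with hK
  have hKbdd : K ⊆ closedBall 0 L := by
    intro g hg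
    simp only [hK, Set.mem_iUnion] at hg
    obtain ⟨y, hy, hgy⟩ := hg
    simpa [mem_closedBall, dist_zero_right] using norm_le_of_mem_Sset hL0 hf hgy
  have hKcompact : IsCompact K :=
    isCompact_of_isClosed_isBounded (isClosed_unionSset f x δ)
      ((isBounded_closedBall).subset hKbdd)
  have hclosed : IsClosed (convexHull ℝ K) := (my_isCompact_convexHull hKcompact).isClosed
  refine Convex.integral_mem (convex_convexHull ℝ K) hclosed ?_ ?_
  · filter_upwards [hball, hdiff_ae] with u hu hud
    refine subset_convexHull ℝ K ?_
    have hy : x + δ • u ∈ closedBall x δ := by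
      rw [mem_closedBall, dist_self_add_left, norm_smul, Real.norm_eq_abs, abs_of_pos hδ]
      calc δ * ‖u‖ ≤ δ * 1 := by
            have : ‖u‖ ≤ 1 := by simpa [mem_closedBall, dist_zero_right] using hu
            nlinarith
        _ = δ := mul_one δ
    exact Set.mem_biUnion hy (gradient_mem_Sset hud)
  · have : (fun u => gradient f (x + δ • u))
        = fun u => (InnerProductSpace.toDual ℝ (EuclideanSpace ℝ (Fin d))).symm.toLinearIsometry.toContinuousLinearMap (F' u) := rfl
    rw [this]
    exact ContinuousLinearMap.integrable_comp _ hF'_int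
end

section
/- If f : ℝ^d → ℝ is L-Lipschitz, then the Euclidean volume of the symmetric difference region B_δ(x) \ B_δ(x') satisfies Vol(B_δ(x) \ B_δ(x')) ≤ c_{d−1} δ^{d−1} ‖x − x'‖ whenever ‖x − x'‖ ≤ 2δ, where c_k = π^{k/2}/Γ(k/2 + 1) is the volume of the k-dimensional unit ball. -/
open MeasureTheory Metric

lemma aux_ball_vol (n : ℕ) (Z : Fin n → ℝ) (δ : ℝ) (hδ : 0 < δ) :
    volume {z : Fin n → ℝ | ∑ j, (z j - Z j) ^ 2 ≤ δ ^ 2} ≤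
      ENNReal.ofReal (Real.pi ^ ((n : ℝ) / 2) / Real.Gamma ((n : ℝ) / 2 + 1) * δ ^ n) := by
  have key : {z : Fin n → ℝ | ∑ j, (z j - Z j) ^ 2 ≤ δ ^ 2} =
      (MeasurableEquiv.toLp 2 (Fin n → ℝ)) ⁻¹'
        (closedBall ((MeasurableEquiv.toLp 2 (Fin n → ℝ)) Z) δ) := by
    ext z
    simp only [Set.mem_setOf_eq, Set.mem_preimage, mem_closedBall, EuclideanSpace.dist_eq]
    rw [Real.sqrt_le_left hδ.le]
    have : ∀ i : Fin n, dist ((MeasurableEquiv.toLp 2 (Fin n → ℝ)) z i)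
        ((MeasurableEquiv.toLp 2 (Fin n → ℝ)) Z i) ^ 2 = (z i - Z i) ^ 2 := by
      intro i
      rw [Real.dist_eq, sq_abs]
      rfl
    rw [Finset.sum_congr rfl fun i _ => this i]
  rw [key, (show MeasurePreserving (MeasurableEquiv.toLp 2 (Fin n → ℝ)) volume volume from
    (EuclideanSpace.volume_preserving_symm_measurableEquiv_toLp (Fin n)).symm _).measure_preimage
    measurableSet_closedBall.nullMeasurableSet]
  rcases Nat.eq_zero_or_pos n with hn | hn
  · subst hn
    rw [show closedBall ((MeasurableEquiv.toLp 2 (Fin 0 → ℝ)) Z) δ = Set.univ by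
      ext y
      simp only [mem_closedBall, Set.mem_univ, iff_true]
      rw [Subsingleton.elim y ((MeasurableEquiv.toLp 2 (Fin 0 → ℝ)) Z), dist_self]
      exact hδ.le]
    have h1 : (volume : Measure (EuclideanSpace ℝ (Fin 0))) Set.univ = 1 := by
      have h2 := ((EuclideanSpace.volume_preserving_symm_measurableEquiv_toLp (Fin 0))).measure_preimage
        (s := Set.univ) MeasurableSet.univ.nullMeasurableSet
      rw [Set.preimage_univ] at h2
      rw [h2]
      have : (volume : Measure (Fin 0 → ℝ)) = Measure.dirac (fun i => isEmptyElim i) := by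
        rw [show (volume : Measure (Fin 0 → ℝ)) = Measure.pi (fun _ => volume) from rfl]
        exact Measure.pi_of_empty _
      rw [this]
      simp
    rw [h1]
    norm_num [Real.Gamma_one]
  · haveI : Nonempty (Fin n) := Fin.pos_iff_nonempty.mp hn
    rw [EuclideanSpace.volume_closedBall]
    simp only [Fintype.card_fin]
    rw [← ENNReal.ofReal_pow hδ.le, ← ENNReal.ofReal_mul (by positivity)]
    refine le_of_eq (congrArg ENNReal.ofReal ?_)
    have hs : Real.sqrt Real.pi ^ n = Real.pi ^ ((n : ℝ) / 2) := by
      rw [Real.sqrt_eq_rpow, ← Real.rpow_natCast (Real.pi ^ ((1:ℝ)/2)) n,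
        ← Real.rpow_mul Real.pi_nonneg]
      congr 1
      ring
    rw [hs]
    ring

theorem stmt_9 (d : ℕ) (hd : 1 ≤ d) (L δ : ℝ) (hδ : 0 < δ) (hL : 0 < L)
    (f : EuclideanSpace ℝ (Fin d) → ℝ)
    (hf : LipschitzWith (Real.toNNReal L) f)
    (x x' : EuclideanSpace ℝ (Fin d)) (hxx : ‖x - x'‖ ≤ 2 * δ) :
    volume (closedBall x δ \ closedBall x' δ) ≤
      ENNReal.ofReal ((Real.pi ^ (((d : ℝ) - 1) / 2) /
        Real.Gamma (((d : ℝ) - 1) / 2 + 1)) * δ ^ ((d : ℝ) - 1) * ‖x - x'‖) := by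
  rcases eq_or_ne x x' with rfl | hne
  · simp
  obtain ⟨n, rfl⟩ : ∃ n, d = n + 1 := ⟨d - 1, (Nat.succ_pred_eq_of_pos hd).symm⟩
  set t : ℝ := ‖x - x'‖ with ht
  have ht0 : 0 < t := by rw [ht]; exact norm_sub_pos_iff.mpr hne
  set u : EuclideanSpace ℝ (Fin (n + 1)) := t⁻¹ • (x - x') with hu
  have hu1 : ‖u‖ = 1 := by
    rw [hu, norm_smul, norm_inv, Real.norm_eq_abs, abs_of_pos ht0, inv_mul_cancel₀ ht0.ne']
  have hcard : Module.finrank ℝ (EuclideanSpace ℝ (Fin (n + 1))) = Fintype.card (Fin (n + 1)) := by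
    simp [finrank_euclideanSpace]
  have horth : Orthonormal ℝ (({0} : Set (Fin (n + 1))).restrict (fun _ => u)) := by
    rw [orthonormal_iff_ite]
    rintro ⟨i, hi⟩ ⟨j, hj⟩
    simp only [Set.mem_singleton_iff] at hi hj
    subst hi; subst hj
    simp only [Set.restrict_apply, if_pos rfl]
    rw [real_inner_self_eq_norm_sq]; show ‖u‖ ^ 2 = _; rw [hu1]
    norm_num
  obtain ⟨b, hb⟩ := horth.exists_orthonormalBasis_extension_of_card_eq hcard
  have hb0 : b 0 = u := hb 0 rfl
  set w : EuclideanSpace ℝ (Fin (n + 1)) := b.repr x with hw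
  have hx' : x' = x - t • u := by
    rw [hu, smul_smul, mul_inv_cancel₀ ht0.ne', one_smul]; abel
  have hwx' : b.repr x' = w - t • EuclideanSpace.single 0 1 := by
    rw [hx', map_sub, _root_.map_smul, ← hb0, b.repr_self, hw]
  set W : ℝ := w 0 with hW
  set Z : Fin n → ℝ := fun j => w ((0 : Fin (n + 1)).succAbove j) with hZ
  set S : Set (ℝ × (Fin n → ℝ)) := {p | (p.1 - W) ^ 2 + ∑ j, (p.2 j - Z j) ^ 2 ≤ δ ^ 2 ∧
      ¬ ((p.1 - (W - t)) ^ 2 + ∑ j, (p.2 j - Z j) ^ 2 ≤ δ ^ 2)} with hS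
  have hF : MeasurePreserving
      ((fun y : EuclideanSpace ℝ (Fin (n + 1)) => b.repr.symm y) ∘
        ((fun q : Fin (n + 1) → ℝ => (MeasurableEquiv.toLp 2 (Fin (n + 1) → ℝ)) q) ∘
          (fun p : ℝ × (Fin n → ℝ) =>
            (MeasurableEquiv.piFinSuccAbove (fun _ : Fin (n + 1) => ℝ) 0).symm p)))
      (volume.prod volume) volume :=
    (b.measurePreserving_repr_symm).comp
      (((EuclideanSpace.volume_preserving_symm_measurableEquiv_toLp (Fin (n + 1))).symm _).comp
        ((volume_preserving_piFinSuccAbove (fun _ : Fin (n + 1) => ℝ) 0).symm _))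
  have hAmeas : NullMeasurableSet (closedBall x δ \ closedBall x' δ) volume :=
    (measurableSet_closedBall.diff measurableSet_closedBall).nullMeasurableSet
  have hkey : volume (closedBall x δ \ closedBall x' δ) = (volume.prod volume) S := by
    rw [← hF.measure_preimage hAmeas]
    congr 1
    ext p
    obtain ⟨s, z⟩ := p
    set Y : EuclideanSpace ℝ (Fin (n + 1)) :=
      (WithLp.equiv 2 (Fin (n + 1) → ℝ)).symm ((0 : Fin (n + 1)).insertNth s z) with hY
    have hq :
        (b.repr.symm ∘ ((fun q : Fin (n + 1) → ℝ =>
            (MeasurableEquiv.toLp 2 (Fin (n + 1) → ℝ)) q) ∘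
          (fun p : ℝ × (Fin n → ℝ) =>
            (MeasurableEquiv.piFinSuccAbove (fun _ : Fin (n + 1) => ℝ) 0).symm p))) (s, z) =
        b.repr.symm Y := rfl
    simp only [Set.mem_preimage, hq, Set.mem_diff, mem_closedBall, hS, Set.mem_setOf_eq]
    have key : ∀ c : EuclideanSpace ℝ (Fin (n + 1)),
        (dist (b.repr.symm Y) c ≤ δ
          ↔ (s - b.repr c 0) ^ 2 +
              ∑ j, (z j - b.repr c ((0 : Fin (n + 1)).succAbove j)) ^ 2 ≤ δ ^ 2) := by
      intro c
      have hd1 : dist (b.repr.symm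
            Y) c =
          Real.sqrt ((s - b.repr c 0) ^ 2 +
            ∑ j, (z j - b.repr c ((0 : Fin (n + 1)).succAbove j)) ^ 2) := by
        calc dist (b.repr.symm
              Y) c
            = dist (b.repr (b.repr.symm
                Y)) (b.repr c) :=
              (b.repr.dist_map _ _).symm
          _ = dist Y
                (b.repr c) := by rw [b.repr.apply_symm_apply]
          _ = Real.sqrt (∑ i, dist
                (Y i)
                (b.repr c i) ^ 2) := EuclideanSpace.dist_eq _ _
          _ = Real.sqrt ((s - b.repr c 0) ^ 2 +
                ∑ j, (z j - b.repr c ((0 : Fin (n + 1)).succAbove j)) ^ 2) := by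
              rw [Fin.sum_univ_succAbove _ 0]
              simp [hY, Real.dist_eq, sq_abs, Fin.insertNth_apply_same,
                Fin.insertNth_apply_succAbove]
      rw [hd1, Real.sqrt_le_left hδ.le]
    rw [key x, key x', hwx']
    have hs0 : ((w - t • EuclideanSpace.single 0 1 : EuclideanSpace ℝ (Fin (n + 1))) 0) = W - t := by
      simp [hW]
    have hsJ : ∀ j : Fin n,
        ((w - t • EuclideanSpace.single 0 1 : EuclideanSpace ℝ (Fin (n + 1)))
          ((0 : Fin (n + 1)).succAbove j)) = Z j := by
      intro j
      simp [hZ, EuclideanSpace.single_apply, Fin.succ_ne_zero j]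
    rw [hs0]
    simp only [hsJ, ← hw, ← hW, ← hZ]
    exact Iff.rfl
  have hQm : Measurable fun z : Fin n → ℝ => ∑ j, (z j - Z j) ^ 2 := by
    apply Finset.measurable_sum
    intro j _
    exact ((measurable_pi_apply j).sub measurable_const).pow_const 2
  have hBm : MeasurableSet {z : Fin n → ℝ | ∑ j, (z j - Z j) ^ 2 ≤ δ ^ 2} :=
    measurableSet_le hQm measurable_const
  have hSm : MeasurableSet S := by
    rw [hS]
    have h1 : MeasurableSet {p : ℝ × (Fin n → ℝ) |
        (p.1 - W) ^ 2 + ∑ j, (p.2 j - Z j) ^ 2 ≤ δ ^ 2} :=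
      measurableSet_le (((measurable_fst.sub measurable_const).pow_const 2).add
        (hQm.comp measurable_snd)) measurable_const
    have h2 : MeasurableSet {p : ℝ × (Fin n → ℝ) |
        (p.1 - (W - t)) ^ 2 + ∑ j, (p.2 j - Z j) ^ 2 ≤ δ ^ 2} :=
      measurableSet_le (((measurable_fst.sub measurable_const).pow_const 2).add
        (hQm.comp measurable_snd)) measurable_const
    exact h1.inter h2.compl
  have hsec : ∀ z : Fin n → ℝ, volume ((fun s => (s, z)) ⁻¹' S) ≤
      Set.indicator {z : Fin n → ℝ | ∑ j, (z j - Z j) ^ 2 ≤ δ ^ 2}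
        (fun _ => ENNReal.ofReal t) z := by
    intro z
    by_cases hz : ∑ j, (z j - Z j) ^ 2 ≤ δ ^ 2
    · rw [Set.indicator_of_mem (show z ∈ {z : Fin n → ℝ | ∑ j, (z j - Z j) ^ 2 ≤ δ ^ 2} from hz)]
      set a : ℝ := Real.sqrt (δ ^ 2 - ∑ j, (z j - Z j) ^ 2) with ha
      have ha0 : 0 ≤ a := Real.sqrt_nonneg _
      have ha2 : a ^ 2 = δ ^ 2 - ∑ j, (z j - Z j) ^ 2 := Real.sq_sqrt (by linarith)
      have hsub : (fun s => (s, z)) ⁻¹' S ⊆ Set.Ioc (W + a - t) (W + a) := by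
        intro s hs
        simp only [hS, Set.mem_preimage, Set.mem_setOf_eq] at hs
        obtain ⟨h1, h2⟩ := hs
        push_neg at h2
        have hv2 : (s - W) ^ 2 ≤ a ^ 2 := by linarith
        have hv := abs_le_of_sq_le_sq' hv2 ha0
        have hr : (s - (W - t)) ^ 2 = (s - W + t) ^ 2 := by ring
        have ht2 : a ^ 2 < (s - W + t) ^ 2 := by linarith [h2, ha2, hr]
        constructor
        · by_contra hcon
          push_neg at hcon
          have hle : (s - W + t) ^ 2 ≤ a ^ 2 :=
            sq_le_sq' (by linarith [hv.1, ht0.le]) (by linarith)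
          linarith
        · linarith [hv.2]
      refine le_trans (measure_mono hsub) ?_
      rw [Real.volume_Ioc]
      apply ENNReal.ofReal_le_ofReal
      linarith
    · rw [Set.indicator_of_notMem (show z ∉ {z : Fin n → ℝ | ∑ j, (z j - Z j) ^ 2 ≤ δ ^ 2} from hz)]
      have hemp : (fun s => (s, z)) ⁻¹' S = ∅ := by
        ext s
        simp only [hS, Set.mem_preimage, Set.mem_setOf_eq, Set.mem_empty_iff_false, iff_false,
          not_and]
        intro h
        exact absurd (by linarith [sq_nonneg (s - W), h]) hz
      simp [hemp]
  have hfinal : (volume.prod volume) S ≤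
      ENNReal.ofReal (t * (Real.pi ^ ((n : ℝ) / 2) / Real.Gamma ((n : ℝ) / 2 + 1) * δ ^ n)) :=
    calc (volume.prod volume) S
        = ∫⁻ z, volume ((fun s => (s, z)) ⁻¹' S) ∂volume := Measure.prod_apply_symm hSm
      _ ≤ ∫⁻ z, Set.indicator {z : Fin n → ℝ | ∑ j, (z j - Z j) ^ 2 ≤ δ ^ 2}
            (fun _ => ENNReal.ofReal t) z ∂volume := lintegral_mono hsec
      _ = ENNReal.ofReal t * volume {z : Fin n → ℝ | ∑ j, (z j - Z j) ^ 2 ≤ δ ^ 2} := by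
          rw [lintegral_indicator hBm, setLIntegral_const, mul_comm]
      _ ≤ ENNReal.ofReal t *
            ENNReal.ofReal (Real.pi ^ ((n : ℝ) / 2) / Real.Gamma ((n : ℝ) / 2 + 1) * δ ^ n) :=
          mul_le_mul_right (aux_ball_vol n Z δ hδ) _
      _ = ENNReal.ofReal (t * (Real.pi ^ ((n : ℝ) / 2) / Real.Gamma ((n : ℝ) / 2 + 1) * δ ^ n)) :=
          (ENNReal.ofReal_mul ht0.le).symm
  rw [hkey]
  refine hfinal.trans (le_of_eq (congrArg ENNReal.ofReal ?_))
  push_cast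
  rw [show ((n : ℝ) + 1) - 1 = (n : ℝ) by ring, Real.rpow_natCast]
  ring
end
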